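/- Non-preservation of least generating sets under extension: if 𝒯₀ is any set of theories and 𝒯₁ is a set of theories disjoint from Cl_E(𝒯₀) with Cl_E(𝒯₀ ∪ 𝒯₁) = Cl_E(𝒯₀) ⊔ Cl_E(𝒯₁) a disjoint union, then 𝒯₀ ∪ 𝒯₁ has a least generating set if and only if both Cl_E(𝒯₀) and Cl_E(𝒯₁) have least generating sets; in particular, if Cl_E(𝒯₁) has no least generating set, then neither does Cl_E(𝒯₀ ∪ 𝒯₁). -/
import Mathlib


open Set

variable {Sentence : Type*}

/-- The set `𝒯_φ` of theories in `𝒯` containing the sentence `φ`. -/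
def setAt (𝒯 : Set (Set Sentence)) (φ : Sentence) : Set (Set Sentence) :=
  {T ∈ 𝒯 | φ ∈ T}

/-- The E-closure of a set of theories, relative to the predicate `isTh` of
being a theory: `𝒯` together with all theories `T` such that every sentence
of `T` belongs to infinitely many members of `𝒯`. -/
def ClE (isTh : Set Sentence → Prop) (𝒯 : Set (Set Sentence)) : Set (Set Sentence) :=
  𝒯 ∪ {T | isTh T ∧ ∀ φ ∈ T, (setAt 𝒯 φ).Infinite}

/-- `𝒢` is the least generating set of the E-closed set `𝒮`. -/
def IsLeastGen (isTh : Set Sentence → Prop) (𝒮 𝒢 : Set (Set Sentence)) : Prop :=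
  𝒢 ⊆ 𝒮 ∧ ClE isTh 𝒢 = 𝒮 ∧
    ∀ 𝒢' : Set (Set Sentence), 𝒢' ⊆ 𝒮 → ClE isTh 𝒢' = 𝒮 → 𝒢 ⊆ 𝒢'

lemma setAt_mono' {𝒜 ℬ : Set (Set Sentence)} (h : 𝒜 ⊆ ℬ) (φ : Sentence) :
    setAt 𝒜 φ ⊆ setAt ℬ φ := fun T hT => ⟨h hT.1, hT.2⟩

lemma subset_ClE' (isTh : Set Sentence → Prop) (𝒜 : Set (Set Sentence)) :
    𝒜 ⊆ ClE isTh 𝒜 := subset_union_left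

lemma ClE_mono' (isTh : Set Sentence → Prop) {𝒜 ℬ : Set (Set Sentence)} (h : 𝒜 ⊆ ℬ) :
    ClE isTh 𝒜 ⊆ ClE isTh ℬ := by
  rintro T (hT | ⟨h1, h2⟩)
  · exact Or.inl (h hT)
  · exact Or.inr ⟨h1, fun φ hφ => (h2 φ hφ).mono (setAt_mono' h φ)⟩

lemma ClE_isTh' (isTh : Set Sentence → Prop) {𝒜 : Set (Set Sentence)}
    (h : ∀ T ∈ 𝒜, isTh T) : ∀ T ∈ ClE isTh 𝒜, isTh T := by
  rintro T (hT | ⟨h1, _⟩)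
  exacts [h T hT, h1]

lemma not_mem_ClE' {isTh : Set Sentence → Prop} {𝒜 : Set (Set Sentence)} {T : Set Sentence}
    (hT : isTh T) (h : T ∉ ClE isTh 𝒜) : ∃ φ ∈ T, (setAt 𝒜 φ).Finite := by
  by_contra hc
  push_neg at hc
  exact h (Or.inr ⟨hT, fun φ hφ => hc φ hφ⟩)

lemma ClE_idem' (isTh : Set Sentence → Prop) (𝒜 : Set (Set Sentence)) :
    ClE isTh (ClE isTh 𝒜) = ClE isTh 𝒜 := by
  refine Subset.antisymm ?_ (subset_ClE' isTh _)
  rintro T (hT | ⟨h1, h2⟩)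
  · exact hT
  by_contra hT
  obtain ⟨φ, hφ, hfin⟩ := not_mem_ClE' h1 hT
  have hsub : setAt (ClE isTh 𝒜) φ ⊆ setAt 𝒜 φ := by
    rintro U ⟨hU | ⟨hU1, hU2⟩, hφU⟩
    · exact ⟨hU, hφU⟩
    · exact absurd hfin (hU2 φ hφU)
  exact h2 φ hφ (hfin.subset hsub)

lemma setAt_union' (𝒜 ℬ : Set (Set Sentence)) (φ : Sentence) :
    setAt (𝒜 ∪ ℬ) φ = setAt 𝒜 φ ∪ setAt ℬ φ := by
  ext T
  constructor
  · rintro ⟨hT | hT, hφ⟩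
    exacts [Or.inl ⟨hT, hφ⟩, Or.inr ⟨hT, hφ⟩]
  · rintro (⟨hT, hφ⟩ | ⟨hT, hφ⟩)
    exacts [⟨Or.inl hT, hφ⟩, ⟨Or.inr hT, hφ⟩]

lemma ClE_union' (conj : Sentence → Sentence → Sentence) (isTh : Set Sentence → Prop)
    (hconj : ∀ T, isTh T → ∀ φ ψ : Sentence, conj φ ψ ∈ T ↔ φ ∈ T ∧ ψ ∈ T)
    {𝒜 ℬ : Set (Set Sentence)} (hA : ∀ T ∈ 𝒜, isTh T) (hB : ∀ T ∈ ℬ, isTh T) :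
    ClE isTh (𝒜 ∪ ℬ) = ClE isTh 𝒜 ∪ ClE isTh ℬ := by
  refine Subset.antisymm ?_
    (union_subset (ClE_mono' isTh subset_union_left) (ClE_mono' isTh subset_union_right))
  rintro T (hT | ⟨h1, h2⟩)
  · rcases hT with h | h
    exacts [Or.inl (Or.inl h), Or.inr (Or.inl h)]
  by_contra hc
  simp only [mem_union, not_or] at hc
  obtain ⟨hcA, hcB⟩ := hc
  obtain ⟨φ, hφ, hfinA⟩ := not_mem_ClE' h1 hcA
  obtain ⟨ψ, hψ, hfinB⟩ := not_mem_ClE' h1 hcB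
  have hχ : conj φ ψ ∈ T := (hconj T h1 φ ψ).mpr ⟨hφ, hψ⟩
  have hsub : setAt (𝒜 ∪ ℬ) (conj φ ψ) ⊆ setAt 𝒜 φ ∪ setAt ℬ ψ := by
    rintro U ⟨hU | hU, hχU⟩
    · exact Or.inl ⟨hU, ((hconj U (hA U hU) φ ψ).mp hχU).1⟩
    · exact Or.inr ⟨hU, ((hconj U (hB U hU) φ ψ).mp hχU).2⟩
  exact h2 (conj φ ψ) hχ ((hfinA.union hfinB).subset hsub)

/-- Splitting a generating set along a disjoint decomposition. -/
lemma split_gen' (conj : Sentence → Sentence → Sentence) (isTh : Set Sentence → Prop)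
    (hconj : ∀ T, isTh T → ∀ φ ψ : Sentence, conj φ ψ ∈ T ↔ φ ∈ T ∧ ψ ∈ T)
    (𝒯₀ 𝒯₁ : Set (Set Sentence))
    (h𝒯₀ : ∀ T ∈ 𝒯₀, isTh T) (h𝒯₁ : ∀ T ∈ 𝒯₁, isTh T)
    (hdisj : Disjoint (ClE isTh 𝒯₀) (ClE isTh 𝒯₁))
    {𝒢 : Set (Set Sentence)} (hsub : 𝒢 ⊆ ClE isTh 𝒯₀ ∪ ClE isTh 𝒯₁)
    (hgen : ClE isTh 𝒢 = ClE isTh 𝒯₀ ∪ ClE isTh 𝒯₁) :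
    ClE isTh (𝒢 ∩ ClE isTh 𝒯₀) = ClE isTh 𝒯₀ ∧
      ClE isTh (𝒢 ∩ ClE isTh 𝒯₁) = ClE isTh 𝒯₁ := by
  set S₀ := ClE isTh 𝒯₀ with hS₀
  set S₁ := ClE isTh 𝒯₁ with hS₁
  have h𝒢eq : (𝒢 ∩ S₀) ∪ (𝒢 ∩ S₁) = 𝒢 := by
    rw [← inter_union_distrib_left]
    exact inter_eq_left.mpr hsub
  have hth₀ : ∀ T ∈ 𝒢 ∩ S₀, isTh T := fun T hT => ClE_isTh' isTh h𝒯₀ T hT.2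
  have hth₁ : ∀ T ∈ 𝒢 ∩ S₁, isTh T := fun T hT => ClE_isTh' isTh h𝒯₁ T hT.2
  have hun : ClE isTh (𝒢 ∩ S₀) ∪ ClE isTh (𝒢 ∩ S₁) = S₀ ∪ S₁ := by
    rw [← ClE_union' conj isTh hconj hth₀ hth₁, h𝒢eq, hgen]
  have hc₀ : ClE isTh (𝒢 ∩ S₀) ⊆ S₀ :=
    (ClE_mono' isTh inter_subset_right).trans (ClE_idem' isTh 𝒯₀).subset
  have hc₁ : ClE isTh (𝒢 ∩ S₁) ⊆ S₁ :=
    (ClE_mono' isTh inter_subset_right).trans (ClE_idem' isTh 𝒯₁).subset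
  constructor
  · refine Subset.antisymm hc₀ fun T hT => ?_
    have : T ∈ ClE isTh (𝒢 ∩ S₀) ∪ ClE isTh (𝒢 ∩ S₁) := hun ▸ Or.inl hT
    rcases this with h | h
    · exact h
    · exact absurd hT (disjoint_left.mp hdisj.symm (hc₁ h))
  · refine Subset.antisymm hc₁ fun T hT => ?_
    have : T ∈ ClE isTh (𝒢 ∩ S₀) ∪ ClE isTh (𝒢 ∩ S₁) := hun ▸ Or.inr hT
    rcases this with h | h
    · exact absurd hT (disjoint_left.mp hdisj (hc₀ h))
    · exact h

/-- Non-preservation under extensions: for a disjoint decomposition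
`Cl_E(𝒯₀ ∪ 𝒯₁) = Cl_E(𝒯₀) ⊔ Cl_E(𝒯₁)`, the union `𝒯₀ ∪ 𝒯₁` has a least
generating set iff both `Cl_E(𝒯₀)` and `Cl_E(𝒯₁)` do; in particular if
`Cl_E(𝒯₁)` has none, neither does `Cl_E(𝒯₀ ∪ 𝒯₁)`. -/
theorem least_gen_disjoint_union
    (conj : Sentence → Sentence → Sentence)
    (isTh : Set Sentence → Prop)
    (hne : ∀ T, isTh T → T.Nonempty)
    (hconj : ∀ T, isTh T → ∀ φ ψ : Sentence, conj φ ψ ∈ T ↔ φ ∈ T ∧ ψ ∈ T)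
    (𝒯₀ 𝒯₁ : Set (Set Sentence))
    (h𝒯₀ : ∀ T ∈ 𝒯₀, isTh T) (h𝒯₁ : ∀ T ∈ 𝒯₁, isTh T)
    (hdisj₁ : Disjoint 𝒯₁ (ClE isTh 𝒯₀))
    (hdisj : Disjoint (ClE isTh 𝒯₀) (ClE isTh 𝒯₁))
    (hsplit : ClE isTh (𝒯₀ ∪ 𝒯₁) = ClE isTh 𝒯₀ ∪ ClE isTh 𝒯₁) :
    ((∃ 𝒢, IsLeastGen isTh (ClE isTh (𝒯₀ ∪ 𝒯₁)) 𝒢) ↔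
        (∃ 𝒢, IsLeastGen isTh (ClE isTh 𝒯₀) 𝒢) ∧
          (∃ 𝒢, IsLeastGen isTh (ClE isTh 𝒯₁) 𝒢)) ∧
      (¬ (∃ 𝒢, IsLeastGen isTh (ClE isTh 𝒯₁) 𝒢) →
        ¬ ∃ 𝒢, IsLeastGen isTh (ClE isTh (𝒯₀ ∪ 𝒯₁)) 𝒢) := by
  set S₀ := ClE isTh 𝒯₀ with hS₀
  set S₁ := ClE isTh 𝒯₁ with hS₁
  have hthS₀ : ∀ T ∈ S₀, isTh T := ClE_isTh' isTh h𝒯₀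
  have hthS₁ : ∀ T ∈ S₁, isTh T := ClE_isTh' isTh h𝒯₁
  have main : (∃ 𝒢, IsLeastGen isTh (ClE isTh (𝒯₀ ∪ 𝒯₁)) 𝒢) ↔
      (∃ 𝒢, IsLeastGen isTh S₀ 𝒢) ∧ (∃ 𝒢, IsLeastGen isTh S₁ 𝒢) := by
    constructor
    · rintro ⟨𝒢, hG1, hG2, hG3⟩
      rw [hsplit] at hG1 hG2 hG3
      obtain ⟨hgen₀, hgen₁⟩ :=
        split_gen' conj isTh hconj 𝒯₀ 𝒯₁ h𝒯₀ h𝒯₁ hdisj hG1 hG2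
      constructor
      · refine ⟨𝒢 ∩ S₀, inter_subset_right, hgen₀, fun 𝒢' h𝒢'sub h𝒢'gen => ?_⟩
        have hth' : ∀ T ∈ 𝒢', isTh T := fun T hT => hthS₀ T (h𝒢'sub hT)
        have hth₁ : ∀ T ∈ 𝒢 ∩ S₁, isTh T := fun T hT => hthS₁ T hT.2
        have hcl : ClE isTh (𝒢' ∪ (𝒢 ∩ S₁)) = S₀ ∪ S₁ := by
          rw [ClE_union' conj isTh hconj hth' hth₁, h𝒢'gen, hgen₁]
        have hsub' : 𝒢' ∪ (𝒢 ∩ S₁) ⊆ S₀ ∪ S₁ :=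
          union_subset (h𝒢'sub.trans subset_union_left)
            (inter_subset_right.trans subset_union_right)
        have hG := hG3 (𝒢' ∪ (𝒢 ∩ S₁)) hsub' hcl
        rintro T ⟨hT𝒢, hTS₀⟩
        rcases hG hT𝒢 with h | h
        · exact h
        · exact absurd hTS₀ (disjoint_left.mp hdisj.symm h.2)
      · refine ⟨𝒢 ∩ S₁, inter_subset_right, hgen₁, fun 𝒢' h𝒢'sub h𝒢'gen => ?_⟩
        have hth' : ∀ T ∈ 𝒢', isTh T := fun T hT => hthS₁ T (h𝒢'sub hT)
        have hth₀ : ∀ T ∈ 𝒢 ∩ S₀, isTh T := fun T hT => hthS₀ T hT.2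
        have hcl : ClE isTh ((𝒢 ∩ S₀) ∪ 𝒢') = S₀ ∪ S₁ := by
          rw [ClE_union' conj isTh hconj hth₀ hth', h𝒢'gen, hgen₀]
        have hsub' : (𝒢 ∩ S₀) ∪ 𝒢' ⊆ S₀ ∪ S₁ :=
          union_subset (inter_subset_right.trans subset_union_left)
            (h𝒢'sub.trans subset_union_right)
        have hG := hG3 ((𝒢 ∩ S₀) ∪ 𝒢') hsub' hcl
        rintro T ⟨hT𝒢, hTS₁⟩
        rcases hG hT𝒢 with h | h
        · exact absurd hTS₁ (disjoint_left.mp hdisj h.2)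
        · exact h
    · rintro ⟨⟨𝒢₀, hG₀1, hG₀2, hG₀3⟩, ⟨𝒢₁, hG₁1, hG₁2, hG₁3⟩⟩
      refine ⟨𝒢₀ ∪ 𝒢₁, ?_, ?_, ?_⟩
      · rw [hsplit]
        exact union_subset_union hG₀1 hG₁1
      · rw [hsplit, ClE_union' conj isTh hconj (fun T hT => hthS₀ T (hG₀1 hT))
          (fun T hT => hthS₁ T (hG₁1 hT)), hG₀2, hG₁2]
      · intro 𝒢' h𝒢'sub h𝒢'gen
        rw [hsplit] at h𝒢'sub h𝒢'gen
        obtain ⟨hgen₀, hgen₁⟩ :=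
          split_gen' conj isTh hconj 𝒯₀ 𝒯₁ h𝒯₀ h𝒯₁ hdisj h𝒢'sub h𝒢'gen
        have h₀ : 𝒢₀ ⊆ 𝒢' ∩ S₀ := hG₀3 _ inter_subset_right hgen₀
        have h₁ : 𝒢₁ ⊆ 𝒢' ∩ S₁ := hG₁3 _ inter_subset_right hgen₁
        exact union_subset (h₀.trans inter_subset_left) (h₁.trans inter_subset_left)
  exact ⟨main, fun h1 h2 => h1 (main.mp h2).2⟩
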